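/- arXiv:2207.04662 — 2 statements merged into one kernel-verified Lean document; each statement's English description precedes it below -/
import Mathlib

section
/- Let z₀ ∈ ℂ with |z₀| > 1 and let μ_P be the harmonic measure on 𝕋 at 1/\bar{z₀}. Then for every n ≥ 0, the Bergman function satisfies B_n(μ_P, z₀) = |z₀|^{2n} and hence λ_n(μ_P, z₀) = |z₀|^{−2n}. -/
/-!
Write `w = 1/z̄₀`. Then `μ_P` is the Poisson measure of the unit disc at `w`, so by the Poisson
integral formula `∫ f dμ_P = f(w)` for every entire `f`. If `deg p ≤ n` and `p(z₀) = 1`, the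
reflected polynomial `p*(z) = zⁿ · conj (p (1/z̄))` has `|p*| = |p|` on the circle and
`p*(w) = wⁿ`, so by Cauchy–Schwarz `∫ |p|² dμ_P = ∫ |p*|² dμ_P ≥ |∫ p* dμ_P|² = |z₀|^{-2n}`.
Equality holds for `p = (z/z₀)ⁿ`, whose modulus on the circle is the constant `|z₀|^{-n}`.
-/

open MeasureTheory Filter Real

/-- The Christoffel function. -/
noncomputable def christoffel (μ : Measure ℂ) (n : ℕ) (z : ℂ) : ℝ :=
  sInf {r : ℝ | ∃ p : Polynomial ℂ, p.natDegree ≤ n ∧ p.eval z = 1 ∧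
    r = ∫ w, (‖p.eval w‖) ^ 2 ∂μ}

/-- The harmonic measure of the unit disk at the point `1/z̄₀`, as a measure on the
unit circle: the image of the Poisson-density measure on `(-π,π]` under `t ↦ e^{it}`. -/
noncomputable def muP (z₀ : ℂ) : Measure ℂ :=
  Measure.map (fun t : ℝ => Complex.exp (t * Complex.I))
    ((volume.restrict (Set.Ioc (-π) π)).withDensity (fun t =>
      ENNReal.ofReal ((1 / (2 * π)) * (1 - ((‖z₀‖)⁻¹) ^ 2)
        / (‖Complex.exp (t * Complex.I) - ((starRingEnd ℂ) z₀)⁻¹‖) ^ 2)))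

open Complex Metric Set

lemma measurable_poissonKernel (c w : ℂ) : Measurable (poissonKernel c w) := by
  unfold poissonKernel
  fun_prop

lemma poissonKernel_nonneg {c w z : ℂ} (h : ‖w - c‖ ≤ ‖z - c‖) : 0 ≤ poissonKernel c w z :=
  div_nonneg (sub_nonneg.2 (pow_le_pow_left₀ (norm_nonneg _) h 2)) (sq_nonneg _)

lemma norm_integral_sq_le_integral_norm_sq {Ω E : Type*} [MeasurableSpace Ω]
    [NormedAddCommGroup E] [NormedSpace ℝ E] {μ : Measure Ω} [IsProbabilityMeasure μ]
    {f : Ω → E} (hf : MemLp f 2 μ) :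
    ‖∫ x, f x ∂μ‖ ^ 2 ≤ ∫ x, ‖f x‖ ^ 2 ∂μ := by
  have hvar := ProbabilityTheory.variance_nonneg (fun x => ‖f x‖) μ
  rw [ProbabilityTheory.variance_eq_sub hf.norm] at hvar
  calc ‖∫ x, f x ∂μ‖ ^ 2 ≤ (∫ x, ‖f x‖ ∂μ) ^ 2 :=
        pow_le_pow_left₀ (norm_nonneg _) (norm_integral_le_integral_norm f) 2
    _ ≤ ∫ x, ‖f x‖ ^ 2 ∂μ := by simpa using hvar

noncomputable def harmonicMeasure (w : ℂ) : Measure ℂ :=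
  Measure.map (fun t : ℝ => exp (t * I))
    ((volume.restrict (Ioc (-π) π)).withDensity fun t =>
      ENNReal.ofReal ((2 * π)⁻¹ * poissonKernel 0 w (exp (t * I))))

lemma ae_norm_eq_one_harmonicMeasure (w : ℂ) : ∀ᵐ z ∂harmonicMeasure w, ‖z‖ = 1 :=
  (ae_map_iff (by fun_prop) (measurableSet_eq_fun (by fun_prop) (by fun_prop))).2
    (ae_of_all _ fun t => norm_exp_ofReal_mul_I t)

section HarmonicMeasure

variable {w : ℂ}

lemma integral_harmonicMeasure {E : Type*} [NormedAddCommGroup E] [NormedSpace ℝ E]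
    (hw : w ∈ ball (0 : ℂ) 1) {f : ℂ → E} (hf : AEStronglyMeasurable f (harmonicMeasure w)) :
    ∫ z, f z ∂harmonicMeasure w = Real.circleAverage (poissonKernel 0 w • f) 0 1 := by
  have hexp : Measurable fun t : ℝ => exp (t * I) := by fun_prop
  have hdens : Measurable fun t : ℝ =>
      ENNReal.ofReal ((2 * π)⁻¹ * poissonKernel 0 w (exp (t * I))) :=
    (((measurable_poissonKernel 0 w).comp hexp).const_mul _).ennreal_ofReal
  rw [harmonicMeasure, integral_map hexp.aemeasurable hf,
    integral_withDensity_eq_integral_toReal_smul hdens (ae_of_all _ fun _ => ENNReal.ofReal_lt_top),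
    Real.circleAverage_eq_integral_add (-π),
    intervalIntegral.integral_comp_add_right (fun θ => (poissonKernel 0 w • f) (circleMap 0 1 θ)),
    ← intervalIntegral.integral_smul, zero_add, show 2 * π + -π = π by ring,
    intervalIntegral.integral_of_le (by linarith [pi_pos])]
  refine setIntegral_congr_fun measurableSet_Ioc fun t _ => ?_
  have hP : 0 ≤ poissonKernel 0 w (exp (t * I)) := poissonKernel_nonneg <| by
    rw [sub_zero, sub_zero, norm_exp_ofReal_mul_I]
    exact (mem_ball_zero_iff.1 hw).le
  simp only [circleMap_zero, ofReal_one, one_mul, Pi.smul_apply', smul_smul]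
  rw [ENNReal.toReal_ofReal (mul_nonneg (by positivity) hP)]

lemma integral_harmonicMeasure_of_differentiable {E : Type*} [NormedAddCommGroup E]
    [NormedSpace ℂ E] [CompleteSpace E] (hw : w ∈ ball (0 : ℂ) 1) {f : ℂ → E}
    (hf : Differentiable ℂ f) :
    ∫ z, f z ∂harmonicMeasure w = f w := by
  rw [integral_harmonicMeasure hw hf.continuous.aestronglyMeasurable]
  exact hf.diffContOnCl.circleAverage_poissonKernel_smul hw

lemma isProbabilityMeasure_harmonicMeasure (hw : w ∈ ball (0 : ℂ) 1) :
    IsProbabilityMeasure (harmonicMeasure w) := by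
  have h := integral_harmonicMeasure_of_differentiable hw (differentiable_const (1 : ℂ))
  rw [integral_const, real_smul, mul_one, ofReal_eq_one] at h
  exact ⟨(ENNReal.toReal_eq_one_iff _).mp h⟩

lemma memLp_harmonicMeasure_of_continuous {E : Type*} [NormedAddCommGroup E]
    (hw : w ∈ ball (0 : ℂ) 1) {f : ℂ → E} (hf : Continuous f) (p : ENNReal) :
    MemLp f p (harmonicMeasure w) := by
  have := isProbabilityMeasure_harmonicMeasure hw
  obtain ⟨C, hC⟩ := (isCompact_sphere (0 : ℂ) 1).exists_bound_of_continuousOn hf.continuousOn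
  exact MemLp.of_bound hf.aestronglyMeasurable C
    ((ae_norm_eq_one_harmonicMeasure w).mono fun z hz => hC z (by simpa using hz))

end HarmonicMeasure

section ConjReflect

open Polynomial

noncomputable def conjReflect (n : ℕ) (p : ℂ[X]) : ℂ[X] := reflect n (p.map (starRingEnd ℂ))

variable {n : ℕ} {p : ℂ[X]}

lemma eval_conjReflect (hp : p.natDegree ≤ n) {z : ℂ} (hz : z ≠ 0) :
    (conjReflect n p).eval z = z ^ n * starRingEnd ℂ (p.eval (starRingEnd ℂ z)⁻¹) := by
  let := invertibleOfNonzero (inv_ne_zero hz)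
  have h := eval₂_reflect_mul_pow (RingHom.id ℂ) z⁻¹ n (p.map (starRingEnd ℂ))
    (natDegree_map_le.trans hp)
  rw [invOf_eq_inv, inv_inv, ← eval, ← eval, eval_map, inv_pow] at h
  rw [← eval₂_at_apply, map_inv₀, conj_conj, conjReflect, ← h]
  field_simp

lemma norm_eval_conjReflect (hp : p.natDegree ≤ n) {z : ℂ} (hz : ‖z‖ = 1) :
    ‖(conjReflect n p).eval z‖ = ‖p.eval z‖ := by
  have hz0 : z ≠ 0 := norm_ne_zero_iff.mp (by rw [hz]; exact one_ne_zero)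
  rw [eval_conjReflect hp hz0, inv_eq_conj (by rwa [norm_conj]), conj_conj, norm_mul, norm_pow,
    hz, one_pow, one_mul, norm_conj]

end ConjReflect

section Christoffel

open Polynomial

variable {w : ℂ}

lemma norm_pow_le_integral_norm_eval_sq (hw : w ∈ ball (0 : ℂ) 1) (hw0 : w ≠ 0)
    {n : ℕ} {p : ℂ[X]} (hp : p.natDegree ≤ n) (hp1 : p.eval (starRingEnd ℂ w)⁻¹ = 1) :
    ‖w‖ ^ (2 * n) ≤ ∫ z, ‖p.eval z‖ ^ 2 ∂harmonicMeasure w := by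
  have := isProbabilityMeasure_harmonicMeasure hw
  calc ‖w‖ ^ (2 * n) = ‖(conjReflect n p).eval w‖ ^ 2 := by
        rw [eval_conjReflect hp hw0, hp1, map_one, mul_one, norm_pow, ← pow_mul, mul_comm]
    _ = ‖∫ z, (conjReflect n p).eval z ∂harmonicMeasure w‖ ^ 2 := by
        rw [integral_harmonicMeasure_of_differentiable hw (Polynomial.differentiable _)]
    _ ≤ ∫ z, ‖(conjReflect n p).eval z‖ ^ 2 ∂harmonicMeasure w :=
        norm_integral_sq_le_integral_norm_sq
          (memLp_harmonicMeasure_of_continuous hw (Polynomial.continuous _) 2)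
    _ = ∫ z, ‖p.eval z‖ ^ 2 ∂harmonicMeasure w :=
        integral_congr_ae ((ae_norm_eq_one_harmonicMeasure w).mono fun z hz => by
          simp only [norm_eval_conjReflect hp hz])

lemma integral_norm_eval_C_mul_X_pow_sq (hw : w ∈ ball (0 : ℂ) 1) (n : ℕ) :
    ∫ z, ‖((C (starRingEnd ℂ w) * X) ^ n).eval z‖ ^ 2 ∂harmonicMeasure w = ‖w‖ ^ (2 * n) := by
  have := isProbabilityMeasure_harmonicMeasure hw
  rw [integral_congr_ae ((ae_norm_eq_one_harmonicMeasure w).mono fun z hz => ?_), integral_const,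
    probReal_univ, one_smul]
  simp only [eval_pow, eval_mul, eval_C, eval_X, norm_pow, norm_mul, norm_conj, hz, mul_one,
    ← pow_mul, mul_comm n 2]

lemma christoffel_harmonicMeasure (hw : w ∈ ball (0 : ℂ) 1) (hw0 : w ≠ 0) (n : ℕ) :
    christoffel (harmonicMeasure w) n (starRingEnd ℂ w)⁻¹ = ‖w‖ ^ (2 * n) := by
  have hC : starRingEnd ℂ w ≠ 0 := by simpa using hw0
  refine IsLeast.csInf_eq ⟨⟨(C (starRingEnd ℂ w) * X) ^ n, ?_, ?_,
    (integral_norm_eval_C_mul_X_pow_sq hw n).symm⟩, ?_⟩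
  · rw [natDegree_pow, natDegree_C_mul_X _ hC, mul_one]
  · rw [eval_pow, eval_mul, eval_C, eval_X, mul_inv_cancel₀ hC, one_pow]
  · rintro r ⟨p, hp, hp1, rfl⟩
    exact norm_pow_le_integral_norm_eval_sq hw hw0 hp hp1

end Christoffel

lemma muP_eq_harmonicMeasure (z₀ : ℂ) : muP z₀ = harmonicMeasure (starRingEnd ℂ z₀)⁻¹ := by
  unfold muP harmonicMeasure
  congr
  funext t
  simp [poissonKernel, norm_exp_ofReal_mul_I, mul_div_assoc]

/-- For `|z₀| > 1` and the harmonic measure `μ_P` at `1/z̄₀`, the Christoffel function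
satisfies `λ_n(μ_P, z₀) = |z₀|^{-2n}`, hence the Bergman function `B_n = λ_n⁻¹` equals
`|z₀|^{2n}`. -/
theorem stmt5 (z₀ : ℂ) (hz : 1 < ‖z₀‖) (n : ℕ) :
    christoffel (muP z₀) n z₀ = (‖z₀‖) ^ (-(2 * n : ℤ)) ∧
    (christoffel (muP z₀) n z₀)⁻¹ = (‖z₀‖) ^ (2 * n) := by
  have hz₀ : z₀ ≠ 0 := norm_pos_iff.mp (one_pos.trans hz)
  have hw : (starRingEnd ℂ z₀)⁻¹ ∈ ball (0 : ℂ) 1 := by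
    simpa using inv_lt_one_of_one_lt₀ hz
  have hchr : christoffel (muP z₀) n z₀ = ‖z₀‖⁻¹ ^ (2 * n) := by
    simpa [muP_eq_harmonicMeasure] using christoffel_harmonicMeasure hw (by simpa using hz₀) n
  rw [hchr, inv_pow, inv_inv, zpow_neg]
  exact ⟨by norm_cast, rfl⟩
end

section
/- Let K ⊂ ℂ be compact with infinitely many points, z₀ ∉ K, and n ∈ ℕ. Then there exists a unique polynomial p_n of degree at most n with ‖p_n‖_K = 1 and p_n(z₀) = M_n, where M_n := sup{ |p(z₀)| : p polynomial of degree ≤ n, ‖p‖_K ≤ 1 }. -/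
open MeasureTheory Filter Real

/-- Sup norm of a polynomial on a set `K`. -/
noncomputable def supNorm (K : Set ℂ) (p : Polynomial ℂ) : ℝ :=
  sSup ((fun w => ‖p.eval w‖) '' K)

/-- `M_n(z₀,K)`: maximal modulus at `z₀` of polynomials of degree at most `n` bounded
by `1` on `K`. -/
noncomputable def Mgrow (K : Set ℂ) (z₀ : ℂ) (n : ℕ) : ℝ :=
  sSup {r : ℝ | ∃ p : Polynomial ℂ, p.natDegree ≤ n ∧
    (∀ w ∈ K, ‖p.eval w‖ ≤ 1) ∧ r = ‖p.eval z₀‖}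

/-!
The maximum `M_n` is attained because a polynomial of degree `≤ n` depends linearly, hence
continuously, on its values at `n + 1` points of `K`.

Call `p` extremal if `deg p ≤ n`, `|p| ≤ 1` on `K` and `|p(z₀)| = M_n`. The peak set
`{w ∈ K : |p(w)| = 1}` of an extremal `p` has more than `n` points (Kolmogorov's criterion):
otherwise interpolation gives `Q` of degree `≤ n` with `Q(z₀) = 0` and `Q = p` on the peak set, and
for small `t > 0` the polynomial `p - t Q` has the same value at `z₀` but sup norm `< 1` on `K`,
so a rescaling beats `M_n`. If `p₁, p₂` are extremal with `p₁(z₀) = p₂(z₀)`, so is their average,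
and strict convexity of `ℂ` makes `p₁ = p₂` on its peak set: `p₁ - p₂` has more than `n` roots.
-/

open Polynomial Set

theorem IsCompact.exists_lt_forall_le {X : Type*} [TopologicalSpace X] {K : Set X}
    (hK : IsCompact K) {f : X → ℝ} (hf : ContinuousOn f K) {c : ℝ} (h : ∀ x ∈ K, f x < c) :
    ∃ a < c, ∀ x ∈ K, f x ≤ a := by
  rcases K.eq_empty_or_nonempty with rfl | hne
  · exact ⟨c - 1, by linarith, by simp⟩
  · obtain ⟨x, hx, hmax⟩ := hK.exists_isMaxOn hne hf
    exact ⟨f x, h x hx, hmax⟩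

theorem exists_pos_forall_norm_combo_lt_one {X E : Type*} [TopologicalSpace X]
    [SeminormedAddCommGroup E] [NormedSpace ℝ E] {K : Set X} (hK : IsCompact K) {f g : X → E}
    (hf : Continuous f) (hg : Continuous g) (hf1 : ∀ x ∈ K, ‖f x‖ ≤ 1)
    (hg0 : ∀ x ∈ K, ‖f x‖ = 1 → g x = 0) :
    ∃ t : ℝ, 0 < t ∧ ∀ x ∈ K, ‖(1 - t) • f x + t • g x‖ < 1 := by
  -- where `‖g‖ ≥ 1`, compactness keeps `‖f‖ ≤ s < 1`; elsewhere any `t ∈ (0, 1]` works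
  have hfF : ∀ x ∈ K ∩ {x | 1 ≤ ‖g x‖}, ‖f x‖ < 1 := fun x ⟨hx, hgx⟩ =>
    (hf1 x hx).lt_of_ne fun h => by norm_num [hg0 x hx h] at hgx
  obtain ⟨s, hs1, hs⟩ := (hK.inter_right (isClosed_le continuous_const hg.norm)).exists_lt_forall_le
    hf.norm.continuousOn hfF
  obtain ⟨B, hB⟩ := hK.exists_bound_of_continuousOn hg.continuousOn
  set B' := max B 0
  have hB' : 0 ≤ B' := le_max_right _ _
  set t := (1 - s) / (1 - s + B')
  have ht0 : 0 < t := div_pos (by linarith) (by linarith)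
  have ht1 : t ≤ 1 := (div_le_one (by linarith)).2 (by linarith)
  have htB : t * (B' - s) < 1 - s := by
    rw [div_mul_eq_mul_div, div_lt_iff₀ (by linarith)]
    nlinarith
  refine ⟨t, ht0, fun x hx => ?_⟩
  have hcombo : ‖(1 - t) • f x + t • g x‖ ≤ (1 - t) * ‖f x‖ + t * ‖g x‖ := by
    refine (norm_add_le _ _).trans_eq ?_
    rw [norm_smul, norm_smul, Real.norm_of_nonneg (by linarith), Real.norm_of_nonneg ht0.le]
  by_cases hgx : 1 ≤ ‖g x‖
  · have hfx := hs x ⟨hx, hgx⟩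
    have hgB : ‖g x‖ ≤ B' := (hB x hx).trans (le_max_left _ _)
    nlinarith
  · nlinarith [hf1 x hx]

theorem exists_natDegree_le_eval_eq_zero_and_eval_eq {F : Type*} [Field F] (s : Finset F) {z₀ : F}
    (hz₀ : z₀ ∉ s) (f : F → F) :
    ∃ Q : F[X], Q.natDegree ≤ s.card ∧ Q.eval z₀ = 0 ∧ ∀ w ∈ s, Q.eval w = f w := by
  classical
  have hinj : InjOn id ((insert z₀ s : Finset F) : Set F) := injOn_id _
  refine ⟨Lagrange.interpolate (insert z₀ s) id (Function.update f z₀ 0), ?_, ?_, fun w hw => ?_⟩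
  · have := Lagrange.degree_interpolate_le (Function.update f z₀ 0) hinj
    rwa [Finset.card_insert_of_notMem hz₀, Nat.add_sub_cancel, ← natDegree_le_iff_degree_le] at this
  · have := Lagrange.eval_interpolate_at_node (Function.update f z₀ 0) hinj
      (Finset.mem_insert_self z₀ s)
    rwa [id, Function.update_self] at this
  · have := Lagrange.eval_interpolate_at_node (Function.update f z₀ 0) hinj
      (Finset.mem_insert_of_mem hw)
    rwa [id, Function.update_of_ne (ne_of_mem_of_not_mem hw hz₀)] at this

section

variable {K : Set ℂ} {z₀ : ℂ} {n : ℕ}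

theorem norm_eval_le_supNorm (hK : IsCompact K) (p : ℂ[X]) {w : ℂ} (hw : w ∈ K) :
    ‖p.eval w‖ ≤ supNorm K p :=
  le_csSup (hK.bddAbove_image p.continuous.norm.continuousOn) (mem_image_of_mem _ hw)

theorem supNorm_le (hK : K.Nonempty) {p : ℂ[X]} {a : ℝ} (h : ∀ w ∈ K, ‖p.eval w‖ ≤ a) :
    supNorm K p ≤ a :=
  csSup_le (hK.image _) (forall_mem_image.2 h)

theorem isGreatest_Mgrow (hinf : K.Infinite) (z₀ : ℂ) (n : ℕ) :
    IsGreatest {r : ℝ | ∃ p : ℂ[X], p.natDegree ≤ n ∧ (∀ w ∈ K, ‖p.eval w‖ ≤ 1) ∧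
      r = ‖p.eval z₀‖} (Mgrow K z₀ n) := by
  set x : Fin (n + 1) → ℂ := fun i => hinf.natEmbedding K i
  have hxK : ∀ i, x i ∈ K := fun i => (hinf.natEmbedding K i).2
  have hx : InjOn x (Finset.univ : Finset (Fin (n + 1))) := fun i _ j _ h =>
    Fin.ext (by simpa using (hinf.natEmbedding K).injective (Subtype.ext h))
  set I := Lagrange.interpolate Finset.univ x with hI_def
  have hI : ∀ w, Continuous fun r => (I r).eval w := fun w =>
    ((leval w).comp I).continuous_of_finiteDimensional
  set T := {r | ∀ w ∈ K, ‖(I r).eval w‖ ≤ 1}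
  have hT : IsCompact T := by
    have hTc : IsClosed T := by
      simp only [T, ofPred_forall]
      exact isClosed_biInter fun w _ => isClosed_le (hI w).norm continuous_const
    refine (isCompact_univ_pi fun _ => isCompact_closedBall (0 : ℂ) 1).of_isClosed_subset hTc
      fun r hr i _ => ?_
    have hri := hr (x i) (hxK i)
    rw [hI_def, Lagrange.eval_interpolate_at_node r hx (Finset.mem_univ i)] at hri
    simpa using hri
  have hset : {r : ℝ | ∃ p : ℂ[X], p.natDegree ≤ n ∧ (∀ w ∈ K, ‖p.eval w‖ ≤ 1) ∧
      r = ‖p.eval z₀‖} = (fun r => ‖(I r).eval z₀‖) '' T := by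
    ext r
    constructor
    · rintro ⟨p, hpn, hpK, rfl⟩
      have hp : p = I fun i => p.eval (x i) := Lagrange.eq_interpolate hx (by
        rw [Finset.card_univ, Fintype.card_fin]
        exact (degree_le_of_natDegree_le hpn).trans_lt (by exact_mod_cast n.lt_succ_self))
      exact ⟨_, fun w hw => hp ▸ hpK w hw, by beta_reduce; rw [← hp]⟩
    · rintro ⟨r, hr, rfl⟩
      refine ⟨I r, ?_, hr, rfl⟩
      have := Lagrange.degree_interpolate_le r hx
      rwa [Finset.card_univ, Fintype.card_fin, Nat.add_sub_cancel,
        ← natDegree_le_iff_degree_le] at this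
  rw [Mgrow, hset]
  exact (hT.image (hI z₀).norm).isGreatest_sSup ⟨_, 0, fun w _ => by simp [I], rfl⟩

theorem one_le_Mgrow (hinf : K.Infinite) (z₀ : ℂ) (n : ℕ) : 1 ≤ Mgrow K z₀ n :=
  (isGreatest_Mgrow hinf z₀ n).2 ⟨1, by simp, by simp, by simp⟩

theorem norm_eval_le_Mgrow_mul (hinf : K.Infinite) {q : ℂ[X]} (hqn : q.natDegree ≤ n) {a : ℝ}
    (hqK : ∀ w ∈ K, ‖q.eval w‖ ≤ a) : ‖q.eval z₀‖ ≤ Mgrow K z₀ n * a := by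
  obtain ⟨w₀, hw₀⟩ := hinf.nonempty
  rcases ((norm_nonneg _).trans (hqK w₀ hw₀)).eq_or_lt with rfl | ha
  · have hq : q = 0 := eq_zero_of_infinite_isRoot q
      (hinf.mono fun w hw => norm_le_zero_iff.1 (hqK w hw))
    simp [hq]
  · have hnorm : ∀ w, ‖(a⁻¹ • q).eval w‖ = a⁻¹ * ‖q.eval w‖ := fun w => by
      rw [eval_smul, norm_smul, Real.norm_of_nonneg (inv_nonneg.2 ha.le)]
    have hle := (isGreatest_Mgrow hinf z₀ n).2 ⟨a⁻¹ • q, (natDegree_smul_le _ _).trans hqn,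
      fun w hw => by rw [hnorm, inv_mul_le_iff₀ ha, mul_one]; exact hqK w hw, (hnorm z₀).symm⟩
    rwa [inv_mul_le_iff₀ ha, mul_comm] at hle

theorem supNorm_eq_one_of_norm_eval_eq_Mgrow (hK : IsCompact K) (hinf : K.Infinite) {p : ℂ[X]}
    (hpn : p.natDegree ≤ n) (hpK : ∀ w ∈ K, ‖p.eval w‖ ≤ 1) (hpz : ‖p.eval z₀‖ = Mgrow K z₀ n) :
    supNorm K p = 1 := by
  have hM := one_le_Mgrow hinf z₀ n
  have hle := norm_eval_le_Mgrow_mul (z₀ := z₀) hinf hpn (a := supNorm K p) fun w hw =>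
    norm_eval_le_supNorm hK p hw
  rw [hpz] at hle
  exact (supNorm_le hinf.nonempty hpK).antisymm (by nlinarith)

theorem exists_eval_eq_Mgrow (hinf : K.Infinite) (z₀ : ℂ) (n : ℕ) :
    ∃ p : ℂ[X], p.natDegree ≤ n ∧ (∀ w ∈ K, ‖p.eval w‖ ≤ 1) ∧ p.eval z₀ = Mgrow K z₀ n := by
  obtain ⟨p, hpn, hpK, hpz⟩ := (isGreatest_Mgrow hinf z₀ n).1
  have hM := one_le_Mgrow hinf z₀ n
  have hp0 : p.eval z₀ ≠ 0 := fun h => by simp [h] at hpz; linarith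
  set c : ℂ := Mgrow K z₀ n / p.eval z₀
  have hc : ‖c‖ = 1 := by
    rw [norm_div, Complex.norm_real, Real.norm_of_nonneg (by linarith), ← hpz,
      div_self (by linarith)]
  refine ⟨c • p, (natDegree_smul_le _ _).trans hpn, fun w hw => ?_, ?_⟩
  · rw [eval_smul, norm_smul, hc, one_mul]
    exact hpK w hw
  · rw [eval_smul, smul_eq_mul, div_mul_cancel₀ _ hp0]

def peakSet (K : Set ℂ) (p : ℂ[X]) : Set ℂ := {w ∈ K | ‖p.eval w‖ = 1}

theorem lt_card_of_peakSet_subset (hK : IsCompact K) (hinf : K.Infinite) (hz₀ : z₀ ∉ K)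
    {p : ℂ[X]} (hpn : p.natDegree ≤ n) (hpK : ∀ w ∈ K, ‖p.eval w‖ ≤ 1)
    (hpz : ‖p.eval z₀‖ = Mgrow K z₀ n) {s : Finset ℂ} (hs : peakSet K p ⊆ s) : n < s.card := by
  by_contra! hsn
  obtain ⟨Q, hQn, hQz, hQs⟩ :=
    exists_natDegree_le_eval_eq_zero_and_eval_eq (s.erase z₀) (s.notMem_erase z₀) p.eval
  have hQpeak : ∀ w ∈ K, ‖p.eval w‖ = 1 → (p - Q).eval w = 0 := fun w hw h1 => by
    rw [eval_sub, hQs w (Finset.mem_erase.2 ⟨ne_of_mem_of_not_mem hw hz₀, hs ⟨hw, h1⟩⟩), sub_self]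
  obtain ⟨t, -, hlt⟩ :=
    exists_pos_forall_norm_combo_lt_one hK p.continuous (p - Q).continuous hpK hQpeak
  set q := (1 - t) • p + t • (p - Q)
  have hq : ∀ w, q.eval w = (1 - t) • p.eval w + t • (p - Q).eval w := fun w => by
    simp only [q, eval_add, eval_smul]
  obtain ⟨a, ha1, ha⟩ := hK.exists_lt_forall_le q.continuous.norm.continuousOn fun w hw =>
    (hq w).symm ▸ hlt w hw
  have hqn : q.natDegree ≤ n := natDegree_add_le_of_degree_le ((natDegree_smul_le _ _).trans hpn)
    ((natDegree_smul_le _ _).trans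
      ((natDegree_sub_le_of_le hpn (hQn.trans ((Finset.card_erase_le).trans hsn))).trans_eq
        (max_self n)))
  have hqz : q.eval z₀ = p.eval z₀ := by
    rw [hq, eval_sub, hQz, sub_zero, ← add_smul, sub_add_cancel, one_smul]
  have hle := norm_eval_le_Mgrow_mul (z₀ := z₀) hinf hqn ha
  rw [hqz, hpz] at hle
  nlinarith [one_le_Mgrow hinf z₀ n]

theorem eq_of_norm_eval_eq_Mgrow (hK : IsCompact K) (hinf : K.Infinite) (hz₀ : z₀ ∉ K)
    {p₁ p₂ : ℂ[X]} (h₁n : p₁.natDegree ≤ n) (h₁K : ∀ w ∈ K, ‖p₁.eval w‖ ≤ 1)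
    (h₂n : p₂.natDegree ≤ n) (h₂K : ∀ w ∈ K, ‖p₂.eval w‖ ≤ 1) (hz : p₁.eval z₀ = p₂.eval z₀)
    (h₁z : ‖p₁.eval z₀‖ = Mgrow K z₀ n) : p₁ = p₂ := by
  by_contra hne
  set p := (1 / 2 : ℝ) • p₁ + (1 / 2 : ℝ) • p₂
  have hp : ∀ w, p.eval w = (1 / 2 : ℝ) • p₁.eval w + (1 / 2 : ℝ) • p₂.eval w := fun w => by
    simp only [p, eval_add, eval_smul]
  have hpK : ∀ w ∈ K, ‖p.eval w‖ ≤ 1 := fun w hw => by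
    simpa [hp] using (convex_closedBall (0 : ℂ) 1) (by simpa using h₁K w hw)
      (by simpa using h₂K w hw) (by norm_num : (0 : ℝ) ≤ 1 / 2) (by norm_num : (0 : ℝ) ≤ 1 / 2)
      (by norm_num)
  have hpz : ‖p.eval z₀‖ = Mgrow K z₀ n := by
    rw [hp, ← hz, ← add_smul]
    norm_num [h₁z]
  have hpeak : peakSet K p ⊆ (p₁ - p₂).roots.toFinset := by
    rintro w ⟨hw, h1⟩
    have hw12 : p₁.eval w = p₂.eval w := by
      by_contra h
      exact (norm_combo_lt_of_ne (h₁K w hw) (h₂K w hw) h (by norm_num) (by norm_num)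
        (by norm_num)).ne (hp w ▸ h1)
    simp [sub_ne_zero.2 hne, hw12]
  have hlt := lt_card_of_peakSet_subset hK hinf hz₀ (natDegree_add_le_of_degree_le
    ((natDegree_smul_le _ _).trans h₁n) ((natDegree_smul_le _ _).trans h₂n)) hpK hpz hpeak
  have hroots := (Multiset.toFinset_card_le _).trans (card_roots' (p₁ - p₂))
  have hdeg := natDegree_sub_le_of_le h₁n h₂n
  omega

end

/-- Existence and uniqueness of the polynomial of extremal growth relative to `K` at
`z₀`: the unique `p` of degree at most `n` with sup norm `1` on `K` and `p(z₀) = M_n`. -/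
theorem stmt6 (K : Set ℂ) (hK : IsCompact K) (hinf : K.Infinite) (z₀ : ℂ) (hz₀ : z₀ ∉ K)
    (n : ℕ) :
    ∃! p : Polynomial ℂ, p.natDegree ≤ n ∧ supNorm K p = 1 ∧
      p.eval z₀ = ((Mgrow K z₀ n : ℝ) : ℂ) := by
  have hnorm : ∀ q : ℂ[X], q.eval z₀ = Mgrow K z₀ n → ‖q.eval z₀‖ = Mgrow K z₀ n := fun q hq => by
    rw [hq, Complex.norm_real, Real.norm_of_nonneg (zero_le_one.trans (one_le_Mgrow hinf z₀ n))]
  obtain ⟨p, hpn, hpK, hpz⟩ := exists_eval_eq_Mgrow hinf z₀ n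
  refine ⟨p, ⟨hpn, supNorm_eq_one_of_norm_eval_eq_Mgrow hK hinf hpn hpK (hnorm p hpz), hpz⟩, ?_⟩
  rintro q ⟨hqn, hq1, hqz⟩
  exact eq_of_norm_eval_eq_Mgrow hK hinf hz₀ hqn (fun w hw => hq1 ▸ norm_eval_le_supNorm hK q hw)
    hpn hpK (hqz.trans hpz.symm) (hnorm q hqz)
end
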